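/- In the odd case of the surjectivity analysis for the operator f ↦ Re[ζ^{-r} f] on (1-ζ)^m A^{k,α}: let m = 2m'+1 be odd, r an integer with r - m' ≥ 0, and let u ∈ R_1 = { u ∈ C^{k,α}_ℂ : u(ζ) = -ζ^{-1} conj(u(ζ)) on bΔ }. Write u = u' + u'' where u' = P(u) is the Szegő projection of u onto A^{k,α}. Then u'' = -conj(ζ u') on bΔ, and f' = ζ^{r-m'} u' ∈ A^{k,α} satisfies ζ^{-(r-m')} f' - ζ^{r-m'} conj(ζ f') = u on bΔ. -/

import Mathlib

noncomputable section

open Complex Metric Set Finset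
open scoped Classical

/-- The closed unit disc in `ℂ`, as a type. -/
abbrev ClosedDisc : Type := (Metric.closedBall (0 : ℂ) 1 : Set ℂ)

/-- The inclusion of the unit circle `bΔ` into the closed unit disc. -/
def bd (z : Circle) : ClosedDisc :=
  ⟨(z : ℂ), by simp [Metric.mem_closedBall, dist_zero_right, Circle.norm_coe]⟩

/-- Negation on the circle. -/
def negCircle (z : Circle) : Circle :=
  ⟨-(z : ℂ), mem_sphere_zero_iff_norm.2 (by simp [Circle.norm_coe])⟩

/-- The angular lift of a function on the unit circle. -/
def liftC (f : Circle → ℂ) : ℝ → ℂ := fun θ => f (Circle.exp θ)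

/-- `f` belongs to `C^{k,α}_ℂ(bΔ)`: its angular lift is `C^k` and the `k`-th derivative of the
lift is `α`-Hölder. -/
def IsCkC (k : ℕ) (α : ℝ) (f : Circle → ℂ) : Prop :=
  ContDiff ℝ (k : ℕ∞) (liftC f) ∧
    ∃ C : NNReal, HolderWith C α.toNNReal (iteratedDeriv k (liftC f))

/-- `f` takes real values. -/
def IsRealValued (f : Circle → ℂ) : Prop := ∀ z, (f z).im = 0

/-- The space `C^{k,α} = C^{k,α}(bΔ, ℝ)` of real-valued Hölder functions. -/
def CkR (k : ℕ) (α : ℝ) : Set (Circle → ℂ) := {f | IsCkC k α f ∧ IsRealValued f}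

/-- The space `C^{k,α}_ℂ`. -/
def CkC (k : ℕ) (α : ℝ) : Set (Circle → ℂ) := {f | IsCkC k α f}

/-- The odd real-valued functions of class `C^{k,α}`. -/
def CkOdd (k : ℕ) (α : ℝ) : Set (Circle → ℂ) :=
  {f | IsCkC k α f ∧ IsRealValued f ∧ ∀ z : Circle, f (negCircle z) = -f z}

/-- The even real-valued functions of class `C^{k,α}`. -/
def CkEven (k : ℕ) (α : ℝ) : Set (Circle → ℂ) :=
  {f | IsCkC k α f ∧ IsRealValued f ∧ ∀ z : Circle, f (negCircle z) = f z}

/-- The subspace `R_m = {v ∈ C^{k,α}_ℂ | v(ζ) = (-1)^m ζ^{-m} conj (v ζ)}`. -/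
def Rm (k : ℕ) (α : ℝ) (m : ℤ) : Set (Circle → ℂ) :=
  {v | IsCkC k α v ∧
    ∀ z : Circle, v z = (-1 : ℂ) ^ m * (z : ℂ) ^ (-m) * (starRingEnd ℂ) (v z)}

/-- The space `C^{k,α}_{0^m}` of real-valued functions of the form `(1-ζ)^m v`,
`v ∈ C^{k,α}_ℂ`. -/
def C0m (k : ℕ) (α : ℝ) (m : ℕ) : Set (Circle → ℂ) :=
  {φ | IsRealValued φ ∧ ∃ v, IsCkC k α v ∧ ∀ z : Circle, φ z = (1 - (z : ℂ)) ^ m * v z}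

/-- Sup norm of the lift. -/
def supN (g : ℝ → ℂ) : ℝ := ⨆ θ : ℝ, ‖g θ‖

/-- Hölder seminorm (computed through the angular lift). -/
def holderSem (α : ℝ) (g : ℝ → ℂ) : ℝ :=
  ⨆ p : ℝ × ℝ, if (Circle.exp p.1 : ℂ) = Circle.exp p.2 then 0
    else ‖g p.1 - g p.2‖ / ‖(Circle.exp p.1 : ℂ) - (Circle.exp p.2 : ℂ)‖ ^ α

/-- The `C^{k,α}` norm. -/
def normCkR (k : ℕ) (α : ℝ) (f : Circle → ℂ) : ℝ :=
  (∑ j ∈ Finset.range (k + 1), supN (iteratedDeriv j (liftC f))) +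
    holderSem α (iteratedDeriv k (liftC f))

/-- The `C^{k,α}_ℂ` norm `‖Re v‖ + ‖Im v‖`. -/
def normCkC (k : ℕ) (α : ℝ) (f : Circle → ℂ) : ℝ :=
  normCkR k α (fun z => ((f z).re : ℂ)) + normCkR k α (fun z => ((f z).im : ℂ))

/-- The norm of `C^{k,α}_{0^m}`: `‖(1-ζ)^m v‖ = ‖v‖_{C^{k,α}_ℂ}`. -/
def normC0m (k : ℕ) (α : ℝ) (m : ℕ) (φ : Circle → ℂ) : ℝ :=
  sInf {r | ∃ v, IsCkC k α v ∧ (∀ z : Circle, φ z = (1 - (z : ℂ)) ^ m * v z) ∧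
    r = normCkC k α v}

/-- Extension of a function on the closed disc to the plane (by junk value `0`). -/
def extD (f : ClosedDisc → ℂ) : ℂ → ℂ :=
  fun z => if h : z ∈ Metric.closedBall (0 : ℂ) 1 then f ⟨z, h⟩ else 0

/-- Boundary trace of a function on the closed disc. -/
def bTrace (f : ClosedDisc → ℂ) : Circle → ℂ := fun z => f (bd z)

/-- `f ∈ A^{k,α}`: `f` is continuous on the closed disc, holomorphic on the open disc, and its
boundary trace is of class `C^{k,α}_ℂ`. -/
def IsA (k : ℕ) (α : ℝ) (f : ClosedDisc → ℂ) : Prop :=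
  ContinuousOn (extD f) (Metric.closedBall 0 1) ∧
    DifferentiableOn ℂ (extD f) (Metric.ball 0 1) ∧ IsCkC k α (bTrace f)

/-- The space `(1-ζ)^m A^{k,α}`. -/
def mA (k : ℕ) (α : ℝ) (m : ℕ) : Set (ClosedDisc → ℂ) :=
  {φ | ∃ f, IsA k α f ∧ ∀ z : ClosedDisc, φ z = (1 - (z : ℂ)) ^ m * f z}

/-- The norm of `A^{k,α}` (the `C^{k,α}_ℂ` norm of the boundary trace). -/
def normA (k : ℕ) (α : ℝ) (f : ClosedDisc → ℂ) : ℝ := normCkC k α (bTrace f)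

/-- The norm of `(1-ζ)^m A^{k,α}`: `‖(1-ζ)^m f‖ = ‖f‖`. -/
def normmA (k : ℕ) (α : ℝ) (m : ℕ) (φ : ClosedDisc → ℂ) : ℝ :=
  sInf {r | ∃ f, IsA k α f ∧ (∀ z : ClosedDisc, φ z = (1 - (z : ℂ)) ^ m * f z) ∧
    r = normA k α f}

/-- A subset `K` of a real vector space (in practice, a linear subspace) has real dimension `d`:
there are `d` linearly independent elements of `K` spanning `K`. -/
def HasRealDim {X : Type*} [AddCommGroup X] [Module ℝ X] (K : Set X) (d : ℕ) : Prop :=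
  ∃ b : Fin d → X, (∀ i, b i ∈ K) ∧ LinearIndependent ℝ b ∧
    ∀ f ∈ K, ∃ c : Fin d → ℝ, f = ∑ i, c i • b i

/-! Put `g = u' + h ∈ A^{k,α}`. Since `ζ̄ = ζ⁻¹` on `bΔ`, the relation `u = -ζ̄ ū` for
`u = u' + conj (ζ h)` becomes `g + conj (ζ g) = 0`, so `(1 + ζ) g` has vanishing real part on `bΔ`.
The maximum principle for `exp (±(1 + ζ) g)` makes the real part vanish on `Δ`, the open mapping
theorem then makes `(1 + ζ) g` constant, and the constant is its value `0` at `ζ = -1`. Hence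
`h = -u'` on `bΔ`, and the two identities are algebra on `|ζ| = 1`. That `ζ^N u' ∈ A^{k,α}` comes
down to multiplication by the smooth periodic function `e^{iNθ}` preserving `C^{k,α}`, which follows
by induction on `k` from `(p f)' = p' f + p f'`. -/

open scoped NNReal

theorem Function.Periodic.deriv {E : Type*} [NormedAddCommGroup E] [NormedSpace ℝ E]
    {f : ℝ → E} {T : ℝ} (hf : Function.Periodic f T) : Function.Periodic (deriv f) T := by
  intro x
  rw [← deriv_comp_add_const, funext hf]

theorem Function.Periodic.iteratedDeriv {E : Type*} [NormedAddCommGroup E] [NormedSpace ℝ E]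
    {f : ℝ → E} {T : ℝ} (hf : Function.Periodic f T) (n : ℕ) :
    Function.Periodic (iteratedDeriv n f) T := by
  induction n with
  | zero => simpa using hf
  | succ n ih => simpa only [iteratedDeriv_succ] using ih.deriv

theorem Function.Periodic.exists_nnnorm_le {E : Type*} [SeminormedAddCommGroup E]
    {f : ℝ → E} {T : ℝ} (hf : Function.Periodic f T) (hT : T ≠ 0) (hc : Continuous f) :
    ∃ M : ℝ≥0, ∀ x, ‖f x‖₊ ≤ M := by
  obtain ⟨M, hM⟩ := isBounded_iff_forall_norm_le.1 (hf.isBounded_of_continuous hT hc)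
  exact ⟨M.toNNReal, fun x => by
    rw [← NNReal.coe_le_coe, coe_nnnorm]; exact (hM _ ⟨x, rfl⟩).trans (le_max_left _ _)⟩

theorem holderWith_zero_of_nnnorm_le {X E : Type*} [PseudoEMetricSpace X]
    [SeminormedAddCommGroup E] {f : X → E} {M : ℝ≥0} (hM : ∀ x, ‖f x‖₊ ≤ M) :
    HolderWith (2 * M) 0 f := by
  intro x y
  rw [NNReal.coe_zero, ENNReal.rpow_zero, mul_one, edist_nndist, nndist_eq_nnnorm]
  exact_mod_cast (nnnorm_sub_le _ _).trans (by rw [two_mul]; exact add_le_add (hM x) (hM y))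

theorem HolderWith.mul_of_nnnorm_le {X R : Type*} [PseudoEMetricSpace X] [SeminormedRing R]
    {f g : X → R} {C D M N r : ℝ≥0} (hf : HolderWith C r f) (hg : HolderWith D r g)
    (hfM : ∀ x, ‖f x‖₊ ≤ M) (hgN : ∀ x, ‖g x‖₊ ≤ N) :
    HolderWith (M * D + C * N) r (f * g) := by
  intro x y
  have hsplit : f x * g x - f y * g y = f x * (g x - g y) + (f x - f y) * g y := by noncomm_ring
  calc edist (f x * g x) (f y * g y)
      ≤ ‖f x‖₊ * edist (g x) (g y) + edist (f x) (f y) * ‖g y‖₊ := by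
        simp only [edist_nndist, nndist_eq_nnnorm, hsplit]
        exact_mod_cast (nnnorm_add_le _ _).trans
          (add_le_add (nnnorm_mul_le _ _) (nnnorm_mul_le _ _))
    _ ≤ M * (D * edist x y ^ (r : ℝ)) + C * edist x y ^ (r : ℝ) * N := by
        gcongr
        exacts [mod_cast hfM x, hg x y, hf x y, mod_cast hgN y]
    _ = ↑(M * D + C * N) * edist x y ^ (r : ℝ) := by push_cast; ring

theorem ContDiff.exists_holderWith_of_periodic {E : Type*} [NormedAddCommGroup E]
    [NormedSpace ℝ E] {f : ℝ → E} {T : ℝ} {β : ℝ≥0} (hf : ContDiff ℝ 1 f)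
    (hper : Function.Periodic f T) (hT : T ≠ 0) (hβ : β ≤ 1) : ∃ C, HolderWith C β f := by
  obtain ⟨M, hM⟩ := hper.exists_nnnorm_le hT hf.continuous
  obtain ⟨L, hL⟩ := hper.deriv.exists_nnnorm_le hT (hf.continuous_deriv le_rfl)
  have hLip := lipschitzWith_of_nnnorm_deriv_le (hf.differentiable one_ne_zero) hL
  exact ⟨_, (holderWith_zero_of_nnnorm_le hM).of_le_of_le (holderWith_one.2 hLip) bot_le hβ⟩

-- `IsCkC k α f` unfolds to `ContDiffHolder k α.toNNReal (liftC f)`.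
def ContDiffHolder (k : ℕ) (β : ℝ≥0) (f : ℝ → ℂ) : Prop :=
  ContDiff ℝ (k : ℕ∞) f ∧ ∃ C, HolderWith C β (iteratedDeriv k f)

namespace ContDiffHolder

variable {k : ℕ} {β : ℝ≥0} {f g : ℝ → ℂ}

theorem add (hf : ContDiffHolder k β f) (hg : ContDiffHolder k β g) :
    ContDiffHolder k β (f + g) := by
  obtain ⟨hf, C, hC⟩ := hf
  obtain ⟨hg, D, hD⟩ := hg
  refine ⟨hf.add hg, C + D, ?_⟩
  have hsum : iteratedDeriv k (f + g) = iteratedDeriv k f + iteratedDeriv k g :=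
    funext fun x => iteratedDeriv_add hf.contDiffAt hg.contDiffAt
  rw [hsum]
  exact hC.add hD

theorem deriv (hf : ContDiffHolder (k + 1) β f) : ContDiffHolder k β (deriv f) := by
  obtain ⟨hf, hC⟩ := hf
  exact ⟨hf.deriv', by rwa [← iteratedDeriv_succ']⟩

theorem of_succ {T : ℝ} (hT : T ≠ 0) (hβ : β ≤ 1) (hper : Function.Periodic f T)
    (hf : ContDiffHolder (k + 1) β f) : ContDiffHolder k β f := by
  obtain ⟨hf, -⟩ := hf
  refine ⟨hf.of_le (by norm_cast; omega), ?_⟩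
  refine ContDiff.exists_holderWith_of_periodic ?_ (hper.iteratedDeriv k) hT hβ
  rw [iteratedDeriv_eq_iterate]
  exact ContDiff.iterate_deriv' 1 k (by rwa [add_comm])

open scoped ContDiff in
theorem mul_of_contDiff {T : ℝ} (hT : T ≠ 0) (hβ : β ≤ 1) {p : ℝ → ℂ} (hp : ContDiff ℝ ∞ p)
    (hpper : Function.Periodic p T) (hfper : Function.Periodic f T) (hf : ContDiffHolder k β f) :
    ContDiffHolder k β (p * f) := by
  induction k generalizing p f with
  | zero =>
    obtain ⟨hf, C, hC⟩ := hf
    obtain ⟨D, hD⟩ := (hp.of_le (mod_cast le_top)).exists_holderWith_of_periodic hpper hT hβ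
    obtain ⟨M, hM⟩ := hpper.exists_nnnorm_le hT hp.continuous
    obtain ⟨N, hN⟩ := hfper.exists_nnnorm_le hT hf.continuous
    rw [iteratedDeriv_zero] at hC
    refine ⟨(hp.of_le (mod_cast le_top)).mul hf, M * C + D * N, ?_⟩
    rw [iteratedDeriv_zero]
    exact hD.mul_of_nnnorm_le hC hM hN
  | succ k ih =>
    have hp' : ContDiff ℝ ∞ (_root_.deriv p) := (contDiff_infty_iff_deriv.1 hp).2
    have hderiv : _root_.deriv (p * f) = _root_.deriv p * f + p * _root_.deriv f := by
      ext x
      exact deriv_mul (hp.differentiable (by simp)).differentiableAt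
        (hf.1.differentiable (by simp)).differentiableAt
    have hlow := (ih hp' hpper.deriv hfper (hf.of_succ hT hβ hfper)).add
      (ih hp hpper hfper.deriv hf.deriv)
    refine ⟨(hp.of_le (mod_cast le_top)).mul hf.1, ?_⟩
    rw [iteratedDeriv_succ', hderiv]
    exact hlow.2

end ContDiffHolder

theorem Complex.re_eq_zero_of_forall_mem_frontier {F : ℂ → ℂ} {U : Set ℂ}
    (hU : Bornology.IsBounded U) (hF : DiffContOnCl ℂ F U) (hre : ∀ z ∈ frontier U, (F z).re = 0) :
    ∀ z ∈ closure U, (F z).re = 0 := by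
  have key (s : ℝ) {z : ℂ} (hz : z ∈ closure U) : s * (F z).re ≤ 0 := by
    have hexp : DiffContOnCl ℂ (fun w => Complex.exp (s * F w)) U :=
      (by fun_prop : Differentiable ℂ fun w : ℂ => Complex.exp (s * w)).comp_diffContOnCl hF
    have := Complex.norm_le_of_forall_mem_frontier_norm_le hU hexp (C := 1) (fun w hw => by
      simp [Complex.norm_exp, hre w hw]) hz
    simpa [Complex.norm_exp] using this
  intro z hz
  have h1 := key 1 hz
  have h2 := key (-1) hz
  simp only [one_mul, neg_mul, neg_nonpos] at h1 h2
  exact le_antisymm h1 h2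

theorem DifferentiableOn.exists_eqOn_const_of_re_eq_zero {F : ℂ → ℂ} {U : Set ℂ}
    (hF : DifferentiableOn ℂ F U) (hUo : IsOpen U) (hUc : IsPreconnected U)
    (hre : ∀ z ∈ U, (F z).re = 0) : ∃ w, ∀ z ∈ U, F z = w := by
  obtain rfl | ⟨z, hz⟩ := U.eq_empty_or_nonempty
  · exact ⟨0, by simp⟩
  refine (hF.analyticOnNhd hUo).is_constant_or_isOpen hUc |>.resolve_right fun hopen => ?_
  have hsub : F '' U ⊆ re ⁻¹' {0} := by
    rintro _ ⟨w, hw, rfl⟩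
    exact hre w hw
  have := interior_maximal hsub (hopen U subset_rfl hUo)
  rw [Complex.interior_preimage_re, interior_singleton] at this
  exact this ⟨z, hz, rfl⟩

theorem eqOn_zero_of_add_conj_mul_eq_zero {g : ℂ → ℂ} (hgc : ContinuousOn g (closedBall 0 1))
    (hd : DifferentiableOn ℂ g (ball 0 1))
    (hb : ∀ w ∈ sphere (0 : ℂ) 1, g w + starRingEnd ℂ (w * g w) = 0) :
    EqOn g 0 (closedBall 0 1) := by
  set F : ℂ → ℂ := fun w => (1 + w) * g w with hF
  have hFd : DifferentiableOn ℂ F (ball 0 1) := by fun_prop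
  have hFc : ContinuousOn F (closedBall 0 1) := by fun_prop
  have hcl : closure (ball (0 : ℂ) 1) = closedBall 0 1 := closure_ball 0 one_ne_zero
  have hre_sphere : ∀ w ∈ sphere (0 : ℂ) 1, (F w).re = 0 := fun w hw => by
    simpa [hF, add_mul] using congrArg re (hb w hw)
  have hre : ∀ w ∈ ball (0 : ℂ) 1, (F w).re = 0 := fun w hw =>
    Complex.re_eq_zero_of_forall_mem_frontier isBounded_ball ⟨hFd, hcl ▸ hFc⟩
      (by rwa [frontier_ball 0 one_ne_zero]) w (subset_closure hw)
  obtain ⟨c, hc⟩ := hFd.exists_eqOn_const_of_re_eq_zero isOpen_ball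
    (convex_ball 0 1).isPreconnected hre
  have hFconst : EqOn F (fun _ => c) (closedBall 0 1) :=
    EqOn.of_subset_closure hc hFc continuousOn_const ball_subset_closedBall hcl.ge
  have hc0 : c = 0 := by
    simpa [hF] using (hFconst (by simp : (-1 : ℂ) ∈ closedBall 0 1)).symm
  refine EqOn.of_subset_closure (fun w hw => ?_) hgc continuousOn_const ball_subset_closedBall
    hcl.ge
  have h1w : 1 + w ≠ 0 := by
    intro h
    rw [eq_neg_of_add_eq_zero_right h] at hw
    simp at hw
  simpa [hF, hc0, h1w] using hc w hw

theorem extD_coe_circle (f : ClosedDisc → ℂ) (z : Circle) : extD f z = f (bd z) := by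
  simp [extD, bd, Circle.norm_coe]

theorem extD_mul_left (g : ℂ → ℂ) (f : ClosedDisc → ℂ) :
    extD (fun z => g z * f z) = fun w => g w * extD f w := by
  ext w
  by_cases hw : w ∈ closedBall (0 : ℂ) 1 <;> simp [extD, hw]

open scoped ContDiff in
theorem IsA.pow_mul {k : ℕ} {α : ℝ} (hα : α ≤ 1) {f : ClosedDisc → ℂ} (hf : IsA k α f) (N : ℕ) :
    IsA k α (fun z => (z : ℂ) ^ N * f z) := by
  obtain ⟨hc, hd, hck⟩ := hf
  refine ⟨?_, ?_, ?_⟩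
  · rw [extD_mul_left (· ^ N)]
    exact (continuous_pow N).continuousOn.mul hc
  · rw [extD_mul_left (· ^ N)]
    exact (differentiable_pow N).differentiableOn.mul hd
  · have hp : ContDiff ℝ ∞ fun θ : ℝ => (Circle.exp θ : ℂ) ^ N := by
      simp only [Circle.coe_exp]
      exact ((Complex.ofRealCLM.contDiff.mul contDiff_const).cexp).pow N
    exact ContDiffHolder.mul_of_contDiff Real.two_pi_pos.ne' (Real.toNNReal_le_one.2 hα) hp
      (Circle.periodic_exp.comp fun z : Circle => (z : ℂ) ^ N)
      (Circle.periodic_exp.comp (bTrace f)) hck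

theorem Circle.starRingEnd_coe (z : Circle) : starRingEnd ℂ (z : ℂ) = (z : ℂ)⁻¹ := by
  rw [← Circle.coe_inv_eq_conj, Circle.coe_inv]

theorem eq_neg_on_circle_of_mem_Rm_one {k : ℕ} {α : ℝ} {u : Circle → ℂ} (hu : u ∈ Rm k α 1)
    {u' h : ClosedDisc → ℂ} (hu' : IsA k α u') (hh : IsA k α h)
    (hdec : ∀ z : Circle, u z = u' (bd z) + starRingEnd ℂ (z * h (bd z))) (z : Circle) :
    h (bd z) = -u' (bd z) := by
  have hsum (z : Circle) :
      u' (bd z) + h (bd z) + starRingEnd ℂ (z * (u' (bd z) + h (bd z))) = 0 := by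
    have hz := hu.2 z
    rw [hdec z] at hz
    simp only [map_add, map_mul, map_inv₀, Circle.starRingEnd_coe, conj_conj, inv_inv, zpow_neg,
      zpow_one] at hz ⊢
    linear_combination hz - h (bd z) * mul_inv_cancel₀ (Circle.coe_ne_zero z)
  have hvanish := eqOn_zero_of_add_conj_mul_eq_zero (hu'.1.add hh.1) (hu'.2.1.add hh.2.1)
    (fun w hw => by
      obtain ⟨z, rfl⟩ : ∃ z : Circle, (z : ℂ) = w := ⟨⟨w, hw⟩, rfl⟩
      simpa [extD_coe_circle] using hsum z) (sphere_subset_closedBall z.2)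
  simp only [Pi.add_apply, extD_coe_circle, Pi.zero_apply] at hvanish
  linear_combination hvanish

theorem stmt_9_general (k : ℕ) (α : ℝ) (hα' : α < 1) (m' : ℕ) (r : ℤ)
    (hr : 0 ≤ r - (m' : ℤ))
    (u : Circle → ℂ) (hu : u ∈ Rm k α 1)
    (u' h : ClosedDisc → ℂ) (hu' : IsA k α u') (hh : IsA k α h)
    (hdec : ∀ z : Circle, u z = u' (bd z) + (starRingEnd ℂ) ((z : ℂ) * h (bd z))) :
    (∀ z : Circle, u z - u' (bd z) = -(starRingEnd ℂ) ((z : ℂ) * u' (bd z))) ∧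
    IsA k α (fun z : ClosedDisc => (z : ℂ) ^ (r - (m' : ℤ)) * u' z) ∧
    ∀ z : Circle,
      (z : ℂ) ^ (-(r - (m' : ℤ))) * ((z : ℂ) ^ (r - (m' : ℤ)) * u' (bd z)) -
        (z : ℂ) ^ (r - (m' : ℤ)) *
          (starRingEnd ℂ) ((z : ℂ) * ((z : ℂ) ^ (r - (m' : ℤ)) * u' (bd z))) = u z := by
  have hu'' (z : Circle) : u z - u' (bd z) = -starRingEnd ℂ (z * u' (bd z)) := by
    rw [hdec z, eq_neg_on_circle_of_mem_Rm_one hu hu' hh hdec z]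
    simp
  refine ⟨hu'', ?_, fun z => ?_⟩
  · lift r - (m' : ℤ) to ℕ using hr with N
    simpa only [zpow_natCast] using hu'.pow_mul hα'.le N
  · have hzn : (z : ℂ) ^ (r - m') ≠ 0 := zpow_ne_zero _ (Circle.coe_ne_zero z)
    have := hu'' z
    simp only [map_mul, map_zpow₀, Circle.starRingEnd_coe, zpow_neg, inv_zpow] at this ⊢
    rw [inv_mul_cancel_left₀ hzn, mul_left_comm, mul_inv_cancel_left₀ hzn]
    linear_combination -this

/-- Odd case of the surjectivity analysis: `m = 2m'+1`, `r - m' ≥ 0`,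
`u ∈ R_1`, and `u = u' + u''` is the Szegő decomposition of `u` (`u' = P(u) ∈ A^{k,α}` and
`u''` has only negative Fourier modes, i.e. `u'' = conj(ζ h)` with `h ∈ A^{k,α}`).
Then `u'' = -conj(ζ u')` on `bΔ`, and `f' = ζ^{r-m'} u' ∈ A^{k,α}` satisfies
`ζ^{-(r-m')} f' - ζ^{r-m'} conj(ζ f') = u` on `bΔ`. -/
theorem stmt_9 (k : ℕ) (α : ℝ) (hα : 0 < α) (hα' : α < 1) (m' : ℕ) (r : ℤ) (m : ℕ)
    (hm : m = 2 * m' + 1) (hr : 0 ≤ r - (m' : ℤ))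
    (u : Circle → ℂ) (hu : u ∈ Rm k α 1)
    (u' h : ClosedDisc → ℂ) (hu' : IsA k α u') (hh : IsA k α h)
    (hdec : ∀ z : Circle, u z = u' (bd z) + (starRingEnd ℂ) ((z : ℂ) * h (bd z))) :
    (∀ z : Circle, u z - u' (bd z) = -(starRingEnd ℂ) ((z : ℂ) * u' (bd z))) ∧
    IsA k α (fun z : ClosedDisc => (z : ℂ) ^ (r - (m' : ℤ)) * u' z) ∧
    ∀ z : Circle,
      (z : ℂ) ^ (-(r - (m' : ℤ))) * ((z : ℂ) ^ (r - (m' : ℤ)) * u' (bd z)) -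
        (z : ℂ) ^ (r - (m' : ℤ)) *
          (starRingEnd ℂ) ((z : ℂ) * ((z : ℂ) ^ (r - (m' : ℤ)) * u' (bd z))) = u z :=
  stmt_9_general k α hα' m' r hr u hu u' h hu' hh hdec
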